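/- Let λ, μ ∈ ℝ and let H : (Fin 3)⁶ → ℝ be a sixth-order tensor satisfying the symmetries H_{ijklmn} = H_{ikjlmn} = H_{ijklnm} = H_{lmnijk}. Define the operator A₊ acting on pairs (u, ν̃) of a smooth vector field u : ℝ³ → ℝ³ and a smooth symmetric-triadic-valued field ν̃ : ℝ³ → (Fin 3)³ → ℝ by: first component (A₊(u,ν̃)¹)_k = −(Δ*·u)_k + Σ_{i,j} ∂_i∂_j (H⫶ν̃)_{ijk}, second component (A₊(u,ν̃)²)_{ijk} = (H⫶∇e(u))_{ijk} − (H⫶ν̃)_{ijk}. Then A₊ is formally symmetric on compactly supported fields: for all smooth, compactly supported pairs (u₁, ν̃₁) and (u₂, ν̃₂) with ν̃₁(x), ν̃₂(x) symmetric triadics for every x, ∫_{ℝ³} Σ_k u₁ₖ (A₊(u₂,ν̃₂)¹)_k dx + ∫_{ℝ³} Σ_{i,j,k} (ν̃₁)_{ijk} (A₊(u₂,ν̃₂)²)_{ijk} dx = ∫_{ℝ³} Σ_k (A₊(u₁,ν̃₁)¹)_k u₂ₖ dx + ∫_{ℝ³} Σ_{i,j,k} (A₊(u₁,ν̃₁)²)_{ijk}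 (ν̃₂)_{ijk} dx. -/

import Mathlib

open MeasureTheory

noncomputable section

/-- Points of `ℝ³`. -/
abbrev V : Type := Fin 3 → ℝ

/-- `i`-th partial derivative of a scalar field on `ℝ³`. -/
noncomputable def pd (i : Fin 3) (f : V → ℝ) : V → ℝ :=
  fun x => fderiv ℝ f x (Pi.single i 1)

/-- Divergence of a vector field. -/
noncomputable def divg (u : V → V) : V → ℝ :=
  fun x => ∑ j : Fin 3, pd j (fun y => u y j) x

/-- Componentwise Laplacian of a vector field. -/
noncomputable def vlap (u : V → V) (k : Fin 3) : V → ℝ :=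
  fun x => ∑ j : Fin 3, pd j (pd j (fun y => u y k)) x

/-- The strain tensor `e_{jk}(u) = ½(∂_j u_k + ∂_k u_j)`. -/
noncomputable def strain (u : V → V) (j k : Fin 3) : V → ℝ :=
  fun x => (1/2) * (pd j (fun y => u y k) x + pd k (fun y => u y j) x)

/-- The Lamé (Navier) operator `(Δ*·u)_k = μ (Δu)_k + (λ+μ) ∂_k (div u)`. -/
noncomputable def navier (lam mu : ℝ) (u : V → V) (k : Fin 3) : V → ℝ :=
  fun x => mu * vlap u k x + (lam + mu) * pd k (divg u) x

/-- The gradient of the strain, `(∇e(u))_{ijk} = ∂_i e_{jk}(u)`. -/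
noncomputable def gradStrain (u : V → V) (i j k : Fin 3) : V → ℝ :=
  pd i (strain u j k)

/-- Contraction of a sixth order tensor with a triadic:
`(H⫶κ)_{ijk} = Σ_{l,m,n} H_{ijklmn} κ_{lmn}`. -/
def Hcontr (H : Fin 3 → Fin 3 → Fin 3 → Fin 3 → Fin 3 → Fin 3 → ℝ)
    (κ : Fin 3 → Fin 3 → Fin 3 → ℝ) (i j k : Fin 3) : ℝ :=
  ∑ l : Fin 3, ∑ m : Fin 3, ∑ n : Fin 3, H i j k l m n * κ l m n

/-- A triadic is symmetric if it is symmetric in its last two indices. -/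
def SymTriadic (κ : Fin 3 → Fin 3 → Fin 3 → ℝ) : Prop :=
  ∀ i j k, κ i j k = κ i k j

/-- The symmetries `H_{ijklmn} = H_{ikjlmn} = H_{ijklnm} = H_{lmnijk}`. -/
def Hsym (H : Fin 3 → Fin 3 → Fin 3 → Fin 3 → Fin 3 → Fin 3 → ℝ) : Prop :=
  ∀ i j k l m n, H i j k l m n = H i k j l m n ∧
    H i j k l m n = H i j k l n m ∧ H i j k l m n = H l m n i j k

/-- Positivity of `H` with constant `α` on symmetric triadics. -/
def Hpos (H : Fin 3 → Fin 3 → Fin 3 → Fin 3 → Fin 3 → Fin 3 → ℝ) (α : ℝ) : Prop :=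
  ∀ κ : Fin 3 → Fin 3 → Fin 3 → ℝ, SymTriadic κ →
    α * (∑ i : Fin 3, ∑ j : Fin 3, ∑ k : Fin 3, (κ i j k)^2) ≤
      ∑ i : Fin 3, ∑ j : Fin 3, ∑ k : Fin 3, ∑ l : Fin 3, ∑ m : Fin 3, ∑ n : Fin 3,
        κ i j k * H i j k l m n * κ l m n

/-- The double stress tensor of Mindlin Form II gradient elasticity with constitutive
parameters `a₁,…,a₅`. -/
noncomputable def dstress (a1 a2 a3 a4 a5 : ℝ) (u : V → V) (i j k : Fin 3) : V → ℝ :=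
  fun x =>
    (1/2) * a1 * ((if j = k then (1:ℝ) else 0) * vlap u i x
      + (if i = j then (1:ℝ) else 0) * pd k (divg u) x
      + (if j = k then (1:ℝ) else 0) * pd i (divg u) x
      + (if i = k then (1:ℝ) else 0) * pd j (divg u) x)
    + 2 * a2 * (if j = k then (1:ℝ) else 0) * pd i (divg u) x
    + (1/2) * a3 * ((if i = j then (1:ℝ) else 0) * vlap u k x
      + (if i = j then (1:ℝ) else 0) * pd k (divg u) x
      + (if i = k then (1:ℝ) else 0) * vlap u j x
      + (if i = k then (1:ℝ) else 0) * pd j (divg u) x)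
    + a4 * (pd i (pd j (fun y => u y k)) x + pd i (pd k (fun y => u y j)) x)
    + (1/2) * a5 * (2 * pd j (pd k (fun y => u y i)) x
      + pd i (pd j (fun y => u y k)) x + pd i (pd k (fun y => u y j)) x)

/-!
Pairing `(u₁, ν̃₁)` with `A₊(u₂, ν̃₂)` and integrating by parts twice turns `∫ u₁ · ∂ᵢ∂ⱼ(H⫶ν̃₂)`
into `∫ Σ ∂ᵢ∂ⱼu₁ₖ (H⫶ν̃₂)_{ijk}`. As `H` is symmetric in its last two indices, `∂ᵢ∂ⱼu₁ₖ` may be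
replaced there by its symmetrisation `∇e(u₁)_{ijk}`, and the major symmetry of `H` turns the
result into `∫ ν̃₂⫶(H⫶∇e(u₁))`. Hence the pairing equals
`-∫ u₁·Δ*u₂ + ∫ ν̃₂⫶(H⫶∇e(u₁)) + ∫ ν̃₁⫶(H⫶∇e(u₂)) - ∫ ν̃₁⫶(H⫶ν̃₂)`,
which is invariant under exchanging the two pairs: `Δ*` is formally self-adjoint, being of the
form `(Δ*u)ₖ = Σ C_{kjab} ∂ₐ∂_b uⱼ` with constant coefficients `C_{kjab} = C_{jkba}`, and `H` has
the major symmetry.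
-/

section PartialDerivatives

variable {f g : V → ℝ}

theorem contDiff_pd {m n : WithTop ℕ∞} (hf : ContDiff ℝ m f) (hnm : n + 1 ≤ m) (i : Fin 3) :
    ContDiff ℝ n (pd i f) :=
  (hf.fderiv_right hnm).clm_apply contDiff_const

theorem continuous_pd (hf : ContDiff ℝ 1 f) (i : Fin 3) : Continuous (pd i f) :=
  (contDiff_pd (n := 0) hf le_rfl i).continuous

theorem continuous_pd_pd (hf : ContDiff ℝ 2 f) (i j : Fin 3) : Continuous (pd i (pd j f)) :=
  continuous_pd (contDiff_pd hf le_rfl j) i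

theorem HasCompactSupport.pd (hf : HasCompactSupport f) (i : Fin 3) :
    HasCompactSupport (pd i f) :=
  hf.fderiv_apply ℝ _

theorem pd_pd_comm (hf : ContDiff ℝ 2 f) (i j : Fin 3) : pd i (pd j f) = pd j (pd i f) := by
  ext x
  have hdf : Differentiable ℝ (fderiv ℝ f) := (hf.fderiv_right le_rfl).differentiable one_ne_zero
  have hpd : ∀ a b : Fin 3,
      pd a (pd b f) x = fderiv ℝ (fderiv ℝ f) x (Pi.single a 1) (Pi.single b 1) := by
    intro a b
    unfold pd
    rw [fderiv_clm_apply (hdf x) (differentiableAt_const _)]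
    simp
  rw [hpd, hpd]
  exact hf.contDiffAt.isSymmSndFDerivAt (by simp) _ _

theorem pd_const_mul (c : ℝ) (f : V → ℝ) (i : Fin 3) :
    pd i (fun y => c * f y) = fun x => c * pd i f x := by
  ext x
  change fderiv ℝ (c • f) x _ = _
  rw [fderiv_const_smul_field]
  rfl

theorem pd_add (hf : Differentiable ℝ f) (hg : Differentiable ℝ g) (i : Fin 3) :
    pd i (fun y => f y + g y) = fun x => pd i f x + pd i g x := by
  ext x
  simp only [pd, fderiv_fun_add (hf x) (hg x), add_apply]

theorem pd_sum {ι : Type*} (s : Finset ι) {f : ι → V → ℝ} (hf : ∀ α, Differentiable ℝ (f α))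
    (i : Fin 3) : pd i (fun y => ∑ α ∈ s, f α y) = fun x => ∑ α ∈ s, pd i (f α) x := by
  ext x
  simp only [pd, fderiv_fun_sum fun α _ => hf α x, sum_apply]

end PartialDerivatives

section IntegrationByParts

variable {f g : V → ℝ}

theorem Continuous.integrable_of_vanishes_with {E : Type*} [Zero E] {F : V → ℝ} {φ : V → E}
    (hF : Continuous F) (hφ : HasCompactSupport φ) (h : ∀ x, φ x = 0 → F x = 0) :
    Integrable F :=
  hF.integrable_of_hasCompactSupport (hφ.mono fun x hx => mt (h x) hx)

theorem integrable_mul_of_hasCompactSupport (hf : Continuous f) (hg : Continuous g)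
    (hfc : HasCompactSupport f) : Integrable fun x => f x * g x :=
  (hf.mul hg).integrable_of_vanishes_with hfc fun x hx => by simp [hx]

theorem integral_mul_pd (hf : ContDiff ℝ 1 f) (hg : ContDiff ℝ 1 g) (hfc : HasCompactSupport f)
    (i : Fin 3) : ∫ x, f x * pd i g x = -∫ x, pd i f x * g x :=
  integral_mul_fderiv_eq_neg_fderiv_mul_of_integrable
    (integrable_mul_of_hasCompactSupport (continuous_pd hf i) hg.continuous (hfc.pd i))
    (integrable_mul_of_hasCompactSupport hf.continuous (continuous_pd hg i) hfc)
    (integrable_mul_of_hasCompactSupport hf.continuous hg.continuous hfc)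
    (fun x _ => hf.differentiable one_ne_zero x) (fun x _ => hg.differentiable one_ne_zero x)

theorem integral_mul_pd_pd (hf : ContDiff ℝ 2 f) (hg : ContDiff ℝ 2 g)
    (hfc : HasCompactSupport f) (i j : Fin 3) :
    ∫ x, f x * pd i (pd j g) x = ∫ x, pd i (pd j f) x * g x := by
  rw [integral_mul_pd (hf.of_le (by norm_num)) (contDiff_pd hg le_rfl j) hfc,
    integral_mul_pd (contDiff_pd hf le_rfl i) (hg.of_le (by norm_num)) (hfc.pd i), neg_neg,
    pd_pd_comm hf]

theorem integral_sum_mul_pd_pd {ι : Type*} [Fintype ι] {f g : ι → V → ℝ} (a b : ι → Fin 3)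
    (hf : ∀ α, ContDiff ℝ 2 (f α)) (hg : ∀ α, ContDiff ℝ 2 (g α))
    (hfc : ∀ α, HasCompactSupport (f α)) :
    ∫ x, ∑ α, f α x * pd (a α) (pd (b α) (g α)) x
      = ∫ x, ∑ α, pd (a α) (pd (b α) (f α)) x * g α x := by
  rw [integral_finsetSum _ fun α _ => integrable_mul_of_hasCompactSupport (hf α).continuous
      (continuous_pd_pd (hg α) _ _) (hfc α),
    integral_finsetSum _ fun α _ => integrable_mul_of_hasCompactSupport
      (continuous_pd_pd (hf α) _ _) (hg α).continuous (((hfc α).pd _).pd _)]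
  exact Finset.sum_congr rfl fun α _ => integral_mul_pd_pd (hf α) (hg α) (hfc α) _ _

end IntegrationByParts

section TensorAlgebra

variable {H : Fin 3 → Fin 3 → Fin 3 → Fin 3 → Fin 3 → Fin 3 → ℝ}

theorem sum_fin3_triple {M : Type*} [AddCommMonoid M] (f : Fin 3 → Fin 3 → Fin 3 → M) :
    ∑ i, ∑ j, ∑ k, f i j k = ∑ p : Fin 3 × Fin 3 × Fin 3, f p.1 p.2.1 p.2.2 := by
  simp only [Fintype.sum_prod_type]

theorem Hcontr_swap (hH : Hsym H) (κ : Fin 3 → Fin 3 → Fin 3 → ℝ) (i j k : Fin 3) :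
    Hcontr H κ i k j = Hcontr H κ i j k := by
  simp only [Hcontr, (hH i j k _ _ _).1]

theorem sum_mul_Hcontr_comm (hH : Hsym H) (a b : Fin 3 → Fin 3 → Fin 3 → ℝ) :
    ∑ i, ∑ j, ∑ k, a i j k * Hcontr H b i j k = ∑ i, ∑ j, ∑ k, b i j k * Hcontr H a i j k := by
  simp only [Hcontr, Finset.mul_sum, sum_fin3_triple]
  rw [Finset.sum_comm]
  refine Finset.sum_congr rfl fun p _ => Finset.sum_congr rfl fun q _ => ?_
  rw [(hH q.1 q.2.1 q.2.2 p.1 p.2.1 p.2.2).2.2]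
  ring

theorem sum_mul_Hcontr_symmetrize (hH : Hsym H) (a b : Fin 3 → Fin 3 → Fin 3 → ℝ) :
    ∑ i, ∑ j, ∑ k, a i j k * Hcontr H (fun l m n => (1/2) * (b l m n + b l n m)) i j k
      = ∑ i, ∑ j, ∑ k, b i j k * Hcontr H a i j k := by
  have hswap : ∑ i, ∑ j, ∑ k, b i k j * Hcontr H a i j k
      = ∑ i, ∑ j, ∑ k, b i j k * Hcontr H a i j k :=
    Finset.sum_congr rfl fun i _ => by
      rw [Finset.sum_comm]; simp only [Hcontr_swap hH]
  rw [sum_mul_Hcontr_comm hH]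
  simp only [add_mul, mul_assoc, Finset.sum_add_distrib, ← Finset.mul_sum, hswap]
  ring

end TensorAlgebra

section Elasticity

variable {u : V → V}

theorem gradStrain_eq (hu : ContDiff ℝ 2 u) (l m n : Fin 3) :
    gradStrain u l m n
      = fun x => (1/2) * (pd l (pd m (fun y => u y n)) x + pd l (pd n (fun y => u y m)) x) := by
  have hd : ∀ a b, Differentiable ℝ (pd a (fun y => u y b)) := fun a b =>
    (contDiff_pd (contDiff_pi.mp hu b) le_rfl a).differentiable one_ne_zero
  change pd l (fun x => (1/2) * (pd m (fun y => u y n) x + pd n (fun y => u y m) x)) = _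
  rw [pd_const_mul, pd_add (hd _ _) (hd _ _)]

theorem continuous_gradStrain (hu : ContDiff ℝ 2 u) (l m n : Fin 3) :
    Continuous (gradStrain u l m n) := by
  rw [gradStrain_eq hu]
  have := fun a b c => continuous_pd_pd (contDiff_pi.mp hu c) a b
  fun_prop

def lameCoeff (lam mu : ℝ) (k j a b : Fin 3) : ℝ :=
  mu * (if k = j ∧ a = b then 1 else 0) + (lam + mu) * (if k = a ∧ j = b then 1 else 0)

theorem lameCoeff_comm (lam mu : ℝ) (k j a b : Fin 3) :
    lameCoeff lam mu k j a b = lameCoeff lam mu j k b a := by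
  unfold lameCoeff
  grind

theorem navier_eq_sum_lameCoeff (lam mu : ℝ) (hu : ContDiff ℝ 2 u) (k : Fin 3) (x : V) :
    navier lam mu u k x
      = ∑ j, ∑ a, ∑ b, lameCoeff lam mu k j a b * pd a (pd b (fun y => u y j)) x := by
  have hd : ∀ j, Differentiable ℝ (pd j (fun y => u y j)) := fun j =>
    (contDiff_pd (contDiff_pi.mp hu j) le_rfl j).differentiable one_ne_zero
  have hdiv : pd k (divg u) x = ∑ j, pd k (pd j (fun y => u y j)) x := by
    unfold divg
    rw [pd_sum _ hd]
  rw [navier, vlap, hdiv]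
  simp [lameCoeff, add_mul, Finset.sum_add_distrib, ite_and, Finset.mul_sum]

theorem continuous_navier (lam mu : ℝ) (hu : ContDiff ℝ 2 u) (k : Fin 3) :
    Continuous (navier lam mu u k) := by
  rw [funext (navier_eq_sum_lameCoeff lam mu hu k)]
  have := fun a b j => continuous_pd_pd (contDiff_pi.mp hu j) a b
  fun_prop

end Elasticity

section FormalSymmetry

variable {u w : V → V} {ν κ : V → Fin 3 → Fin 3 → Fin 3 → ℝ}
  {H : Fin 3 → Fin 3 → Fin 3 → Fin 3 → Fin 3 → Fin 3 → ℝ}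

theorem integral_dot_constCoeff_comm {C : Fin 3 → Fin 3 → Fin 3 → Fin 3 → ℝ}
    (hC : ∀ k j a b, C k j a b = C j k b a) (hu : ContDiff ℝ 2 u) (hw : ContDiff ℝ 2 w)
    (huc : HasCompactSupport u) :
    ∫ x, ∑ k, u x k * ∑ j, ∑ a, ∑ b, C k j a b * pd a (pd b (fun y => w y j)) x
      = ∫ x, ∑ k, w x k * ∑ j, ∑ a, ∑ b, C k j a b * pd a (pd b (fun y => u y j)) x := by
  have key := integral_sum_mul_pd_pd (ι := Fin 3 × Fin 3 × Fin 3 × Fin 3)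
    (f := fun q y => C q.1 q.2.1 q.2.2.1 q.2.2.2 * u y q.1) (g := fun q y => w y q.2.1)
    (fun q => q.2.2.1) (fun q => q.2.2.2)
    (fun q => contDiff_const.mul (contDiff_pi.mp hu q.1)) (fun q => contDiff_pi.mp hw q.2.1)
    (fun q => (huc.comp_left (g := fun v : V => v q.1) rfl).mul_left)
  simp only [pd_const_mul, Fintype.sum_prod_type] at key
  refine (integral_congr_ae (ae_of_all _ fun x => ?_)).trans
    (key.trans (integral_congr_ae (ae_of_all _ fun x => ?_)))
  · simp only [Finset.mul_sum, mul_left_comm (u x _), mul_assoc]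
  · dsimp only
    rw [Finset.sum_comm]
    refine Finset.sum_congr rfl fun k _ => ?_
    rw [Finset.mul_sum]
    refine Finset.sum_congr rfl fun j _ => ?_
    rw [Finset.sum_comm, Finset.mul_sum]
    refine Finset.sum_congr rfl fun a _ => ?_
    rw [Finset.mul_sum]
    refine Finset.sum_congr rfl fun b _ => ?_
    rw [hC, pd_pd_comm (contDiff_pi.mp hu j)]
    ring

theorem integral_dot_navier_comm (lam mu : ℝ) (hu : ContDiff ℝ 2 u) (hw : ContDiff ℝ 2 w)
    (huc : HasCompactSupport u) :
    ∫ x, ∑ k, u x k * navier lam mu w k x = ∫ x, ∑ k, w x k * navier lam mu u k x := by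
  simp only [navier_eq_sum_lameCoeff lam mu hu, navier_eq_sum_lameCoeff lam mu hw]
  exact integral_dot_constCoeff_comm (lameCoeff_comm lam mu) hu hw huc

@[fun_prop]
theorem contDiff_Hcontr {n : WithTop ℕ∞} (hν : ContDiff ℝ n ν) (i j k : Fin 3) :
    ContDiff ℝ n (fun y => Hcontr H (ν y) i j k) := by
  unfold Hcontr
  fun_prop

@[fun_prop]
theorem continuous_Hcontr (hκ : Continuous κ) (i j k : Fin 3) :
    Continuous (fun y => Hcontr H (κ y) i j k) := by
  unfold Hcontr
  fun_prop

theorem integral_dot_Hcontr_comm (hH : Hsym H) :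
    ∫ x, ∑ i, ∑ j, ∑ k, ν x i j k * Hcontr H (κ x) i j k
      = ∫ x, ∑ i, ∑ j, ∑ k, κ x i j k * Hcontr H (ν x) i j k :=
  integral_congr_ae (ae_of_all _ fun x => sum_mul_Hcontr_comm hH (ν x) (κ x))

theorem integral_dot_divDiv_Hcontr (hH : Hsym H) (hu : ContDiff ℝ 2 u) (hν : ContDiff ℝ 2 ν)
    (huc : HasCompactSupport u) :
    ∫ x, ∑ k, u x k * ∑ i, ∑ j, pd i (pd j (fun y => Hcontr H (ν y) i j k)) x
      = ∫ x, ∑ i, ∑ j, ∑ k, ν x i j k * Hcontr H (fun l m n => gradStrain u l m n x) i j k := by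
  have key := integral_sum_mul_pd_pd (ι := Fin 3 × Fin 3 × Fin 3)
    (f := fun q y => u y q.1) (g := fun q y => Hcontr H (ν y) q.2.1 q.2.2 q.1)
    (fun q => q.2.1) (fun q => q.2.2) (fun q => contDiff_pi.mp hu q.1)
    (fun q => contDiff_Hcontr hν _ _ _) (fun q => huc.comp_left (g := fun v : V => v q.1) rfl)
  simp only [Fintype.sum_prod_type] at key
  refine (integral_congr_ae (ae_of_all _ fun x => ?_)).trans
    (key.trans (integral_congr_ae (ae_of_all _ fun x => ?_)))
  · simp only [Finset.mul_sum]
  · simp only [gradStrain_eq hu, sum_mul_Hcontr_symmetrize hH]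
    rw [Finset.sum_comm]
    exact Finset.sum_congr rfl fun i _ => Finset.sum_comm

theorem integral_aplus_pairing_eq (lam mu : ℝ) (hH : Hsym H) (hu : ContDiff ℝ 2 u)
    (hw : ContDiff ℝ 2 w) (hν : Continuous ν) (hκ : ContDiff ℝ 2 κ) (huc : HasCompactSupport u)
    (hνc : HasCompactSupport ν) :
    (∫ x, ∑ k, u x k * (-(navier lam mu w k x)
        + ∑ i, ∑ j, pd i (pd j (fun y => Hcontr H (κ y) i j k)) x))
      + (∫ x, ∑ i, ∑ j, ∑ k, ν x i j k *
        (Hcontr H (fun l m n => gradStrain w l m n x) i j k - Hcontr H (κ x) i j k))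
    = -(∫ x, ∑ k, u x k * navier lam mu w k x)
      + (∫ x, ∑ i, ∑ j, ∑ k, κ x i j k * Hcontr H (fun l m n => gradStrain u l m n x) i j k)
      + (∫ x, ∑ i, ∑ j, ∑ k, ν x i j k * Hcontr H (fun l m n => gradStrain w l m n x) i j k)
      - ∫ x, ∑ i, ∑ j, ∑ k, ν x i j k * Hcontr H (κ x) i j k := by
  have := continuous_navier lam mu hw
  have := continuous_gradStrain hw
  have := fun i j k a b => continuous_pd_pd (contDiff_Hcontr (H := H) hκ i j k) a b
  have := hu.continuous
  have := hκ.continuous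
  simp only [mul_add, mul_sub, mul_neg, Finset.sum_add_distrib, Finset.sum_sub_distrib,
    Finset.sum_neg_distrib]
  rw [integral_add, integral_neg, integral_sub, integral_dot_divDiv_Hcontr hH hu hκ huc]
  · ring
  all_goals first
    | exact Continuous.integrable_of_vanishes_with (by fun_prop) huc fun x hx => by simp [hx]
    | exact Continuous.integrable_of_vanishes_with (by fun_prop) hνc fun x hx => by simp [hx]

end FormalSymmetry

theorem Aplus_formally_symmetric_general
    (lam mu : ℝ) (H : Fin 3 → Fin 3 → Fin 3 → Fin 3 → Fin 3 → Fin 3 → ℝ) (hH : Hsym H)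
    (u₁ u₂ : V → V) (ν₁ ν₂ : V → Fin 3 → Fin 3 → Fin 3 → ℝ)
    (hu₁ : ContDiff ℝ (⊤ : ℕ∞) u₁) (hu₂ : ContDiff ℝ (⊤ : ℕ∞) u₂)
    (hν₁ : ContDiff ℝ (⊤ : ℕ∞) ν₁) (hν₂ : ContDiff ℝ (⊤ : ℕ∞) ν₂)
    (hu₁c : HasCompactSupport u₁) (hu₂c : HasCompactSupport u₂)
    (hν₁c : HasCompactSupport ν₁) (hν₂c : HasCompactSupport ν₂)
    -- first component of `A₊(u,ν̃)`
    (A1 : (V → V) → (V → Fin 3 → Fin 3 → Fin 3 → ℝ) → Fin 3 → V → ℝ)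
    (hA1 : A1 = fun u ν k x =>
      -(navier lam mu u k x)
        + ∑ i : Fin 3, ∑ j : Fin 3, pd i (pd j (fun y => Hcontr H (ν y) i j k)) x)
    -- second component of `A₊(u,ν̃)`
    (A2 : (V → V) → (V → Fin 3 → Fin 3 → Fin 3 → ℝ) → Fin 3 → Fin 3 → Fin 3 → V → ℝ)
    (hA2 : A2 = fun u ν i j k x =>
      Hcontr H (fun l m n => gradStrain u l m n x) i j k - Hcontr H (ν x) i j k) :
    (∫ x : V, ∑ k : Fin 3, u₁ x k * A1 u₂ ν₂ k x)
      + (∫ x : V, ∑ i : Fin 3, ∑ j : Fin 3, ∑ k : Fin 3, ν₁ x i j k * A2 u₂ ν₂ i j k x)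
    = (∫ x : V, ∑ k : Fin 3, A1 u₁ ν₁ k x * u₂ x k)
      + (∫ x : V, ∑ i : Fin 3, ∑ j : Fin 3, ∑ k : Fin 3, A2 u₁ ν₁ i j k x * ν₂ x i j k) := by
  have smooth : ∀ {X : Type} [NormedAddCommGroup X] [NormedSpace ℝ X] {φ : V → X},
      ContDiff ℝ (⊤ : ℕ∞) φ → ContDiff ℝ 2 φ := fun h => h.of_le (by norm_cast)
  simp only [mul_comm (A1 u₁ ν₁ _ _), mul_comm (A2 u₁ ν₁ _ _ _ _)]
  subst hA1 hA2
  rw [integral_aplus_pairing_eq lam mu hH (smooth hu₁) (smooth hu₂) hν₁.continuous (smooth hν₂)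
      hu₁c hν₁c,
    integral_aplus_pairing_eq lam mu hH (smooth hu₂) (smooth hu₁) hν₂.continuous (smooth hν₁)
      hu₂c hν₂c,
    integral_dot_navier_comm lam mu (smooth hu₁) (smooth hu₂) hu₁c,
    integral_dot_Hcontr_comm (ν := ν₁) (κ := ν₂) hH]
  ring

/-- the operator `A₊` is formally symmetric on smooth compactly supported
fields. -/
theorem Aplus_formally_symmetric
    (lam mu : ℝ) (H : Fin 3 → Fin 3 → Fin 3 → Fin 3 → Fin 3 → Fin 3 → ℝ) (hH : Hsym H)
    (u₁ u₂ : V → V) (ν₁ ν₂ : V → Fin 3 → Fin 3 → Fin 3 → ℝ)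
    (hu₁ : ContDiff ℝ (⊤ : ℕ∞) u₁) (hu₂ : ContDiff ℝ (⊤ : ℕ∞) u₂)
    (hν₁ : ContDiff ℝ (⊤ : ℕ∞) ν₁) (hν₂ : ContDiff ℝ (⊤ : ℕ∞) ν₂)
    (hu₁c : HasCompactSupport u₁) (hu₂c : HasCompactSupport u₂)
    (hν₁c : HasCompactSupport ν₁) (hν₂c : HasCompactSupport ν₂)
    (hsym₁ : ∀ x, SymTriadic (ν₁ x)) (hsym₂ : ∀ x, SymTriadic (ν₂ x))
    -- first component of `A₊(u,ν̃)`
    (A1 : (V → V) → (V → Fin 3 → Fin 3 → Fin 3 → ℝ) → Fin 3 → V → ℝ)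
    (hA1 : A1 = fun u ν k x =>
      -(navier lam mu u k x)
        + ∑ i : Fin 3, ∑ j : Fin 3, pd i (pd j (fun y => Hcontr H (ν y) i j k)) x)
    -- second component of `A₊(u,ν̃)`
    (A2 : (V → V) → (V → Fin 3 → Fin 3 → Fin 3 → ℝ) → Fin 3 → Fin 3 → Fin 3 → V → ℝ)
    (hA2 : A2 = fun u ν i j k x =>
      Hcontr H (fun l m n => gradStrain u l m n x) i j k - Hcontr H (ν x) i j k) :
    (∫ x : V, ∑ k : Fin 3, u₁ x k * A1 u₂ ν₂ k x)
      + (∫ x : V, ∑ i : Fin 3, ∑ j : Fin 3, ∑ k : Fin 3, ν₁ x i j k * A2 u₂ ν₂ i j k x)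
    = (∫ x : V, ∑ k : Fin 3, A1 u₁ ν₁ k x * u₂ x k)
      + (∫ x : V, ∑ i : Fin 3, ∑ j : Fin 3, ∑ k : Fin 3, A2 u₁ ν₁ i j k x * ν₂ x i j k) :=
  Aplus_formally_symmetric_general lam mu H hH u₁ u₂ ν₁ ν₂ hu₁ hu₂ hν₁ hν₂ hu₁c hu₂c hν₁c hν₂c A1
    hA1 A2 hA2
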